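/- Let l ≥ 1 and let a, b, c : ℤ → ℂ be l-periodic sequences. Let p be an integer, let T = tr A_l(p), let D = det A_l(p), assume D ≠ 0, and let d be a complex number with d² = D. Then for every integer j with 0 ≤ j ≤ l − 2 and every integer m ≥ 1, K_{lm+j}(p−j) = d^{m−1}·U_{m−1}(T/(2d))·(K_j(p−j)·K_l(p) − b_{p−1}·c_{p−1}·K_{j−1}(p−j)·K_{l−1}(p+1)) − d^m·U_{m−2}(T/(2d))·K_j(p−j). -/

import Mathlib

/-!
Transfer matrices: expanding the continuant along its first column gives the three-term
recurrence `K_{n+1}(p) = a_p K_n(p+1) - b_p c_p K_{n-1}(p+2)`, so `A_n(p)` has first column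
`(K_n(p), K_{n-1}(p+1))` and first row `(K_n(p), -b_{p+n-1} c_{p+n-1} K_{n-1}(p))`. Since
`A_{j+lm}(p-j) = A_j(p-j) · A_l(p)^m` by periodicity, it remains to compute `A_l(p)^m`. By
Cayley–Hamilton `B = A_l(p)` satisfies `B² = T B - d² I`, and the powers of such a `B` are
`B^m = d^{m-1} U_{m-1}(T/2d) B - d^m U_{m-2}(T/2d) I`.
-/

/-- The continuant `K_n(p)` of the sequences `a b c : ℤ → ℂ`: the determinant of the
`n × n` tridiagonal matrix with diagonal `a_p, …, a_{p+n-1}`, superdiagonal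
`b_p, …, b_{p+n-2}` and subdiagonal `c_p, …, c_{p+n-2}`; it equals `1` for `n = 0`
and `0` for `n < 0`. -/
noncomputable def contK (a b c : ℤ → ℂ) (p n : ℤ) : ℂ :=
  if n < 0 then 0 else
    Matrix.det (Matrix.of fun i j : Fin n.toNat =>
      if (i : ℕ) = (j : ℕ) then a (p + (i : ℕ))
      else if (i : ℕ) + 1 = (j : ℕ) then b (p + (i : ℕ))
      else if (i : ℕ) = (j : ℕ) + 1 then c (p + (j : ℕ))
      else 0)

/-- The 2×2 matrix `L(α, β)` with first row `(α, β)` and second row `(1, 0)`. -/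
def Lmat (α β : ℂ) : Matrix (Fin 2) (Fin 2) ℂ := !![α, β; 1, 0]

/-- `A_n(p) = L(a_p, −b_p c_p) ⋯ L(a_{p+n−1}, −b_{p+n−1} c_{p+n−1})`. -/
noncomputable def Amat (a b c : ℤ → ℂ) (p : ℤ) (n : ℕ) : Matrix (Fin 2) (Fin 2) ℂ :=
  ((List.range n).map (fun i => Lmat (a (p + (i : ℕ))) (-(b (p + (i : ℕ)) * c (p + (i : ℕ)))))).prod

open Polynomial Polynomial.Chebyshev

theorem Matrix.sq_fin_two {R : Type*} [CommRing R] [Nontrivial R]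
    (M : Matrix (Fin 2) (Fin 2) R) : M ^ 2 = M.trace • M - M.det • 1 := by
  have h := M.aeval_self_charpoly
  simp only [Matrix.charpoly_fin_two, map_add, map_sub, map_pow, aeval_X, map_mul,
    Polynomial.aeval_C, Algebra.algebraMap_eq_smul_one, smul_mul_assoc, one_mul] at h
  rw [← sub_eq_zero, ← h]
  abel

/-- At `m = 0` the truncated exponent `m - 1 = 0` is harmless because `U_{-1} = 0`. -/
theorem pow_eq_chebyshevU {R A : Type*} [CommRing R] [Ring A] [Algebra R A] (a : A) (d x : R)
    (ha : a ^ 2 = (2 * d * x) • a - d ^ 2 • 1) (m : ℕ) :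
    a ^ m = (d ^ (m - 1) * (U R ((m : ℤ) - 1)).eval x) • a
      - (d ^ m * (U R ((m : ℤ) - 2)).eval x) • 1 := by
  induction m with
  | zero => simp
  | succ m ih =>
    rcases m with _ | m
    · simp
    have e1 : ((m + 1 + 1 : ℕ) : ℤ) - 1 = m + 1 := by push_cast; ring
    have e2 : ((m + 1 + 1 : ℕ) : ℤ) - 2 = m := by push_cast; ring
    have e3 : ((m + 1 : ℕ) : ℤ) - 1 = m := by push_cast; ring
    have e4 : ((m + 1 : ℕ) : ℤ) - 2 = m - 1 := by push_cast; ring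
    rw [e3, e4, Nat.add_sub_cancel] at ih
    rw [e1, e2, Nat.add_sub_cancel, pow_succ, ih, sub_mul, smul_mul_assoc, ← sq, ha,
      smul_mul_assoc, one_mul, U_add_one, eval_sub, eval_mul, eval_mul, eval_X, eval_ofNat]
    match_scalars <;> ring

section Continuant

variable (a b c : ℤ → ℂ)

noncomputable def tridiag (p : ℤ) (n : ℕ) : Matrix (Fin n) (Fin n) ℂ :=
  Matrix.of fun i j =>
    if (i : ℕ) = (j : ℕ) then a (p + (i : ℕ))
    else if (i : ℕ) + 1 = (j : ℕ) then b (p + (i : ℕ))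
    else if (i : ℕ) = (j : ℕ) + 1 then c (p + (j : ℕ))
    else 0

theorem contK_natCast (p : ℤ) (n : ℕ) : contK a b c p n = (tridiag a b c p n).det := by
  rw [contK, if_neg (Int.natCast_nonneg n).not_gt]
  rfl

theorem contK_of_neg (p : ℤ) {n : ℤ} (h : n < 0) : contK a b c p n = 0 := if_pos h

theorem contK_zero (p : ℤ) : contK a b c p 0 = 1 := by
  simpa using contK_natCast a b c p 0

theorem contK_one (p : ℤ) : contK a b c p 1 = a p := by
  simpa [tridiag] using contK_natCast a b c p 1

theorem tridiag_submatrix_succ (p : ℤ) (n : ℕ) :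
    (tridiag a b c p (n + 1)).submatrix Fin.succ Fin.succ = tridiag a b c (p + 1) n := by
  ext i j
  simp only [tridiag, Matrix.submatrix_apply, Matrix.of_apply, Fin.val_succ, Nat.cast_succ,
    add_left_inj, ← add_assoc, add_right_comm p 1]

theorem det_tridiag_submatrix_succAbove_one (p : ℤ) (n : ℕ) :
    ((tridiag a b c p (n + 2)).submatrix (Fin.succAbove 1) Fin.succ).det =
      b p * (tridiag a b c (p + 2) n).det := by
  set N := (tridiag a b c p (n + 2)).submatrix (Fin.succAbove 1) Fin.succ
  have hminor : N.submatrix Fin.succ (Fin.succAbove 0) = tridiag a b c (p + 2) n := by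
    ext i j
    have hi : ((Fin.succAbove (1 : Fin (n + 2)) i.succ : Fin (n + 2)) : ℕ) = i + 2 := by
      simp [Fin.succAbove, Fin.lt_def]
    simp only [N, tridiag, Matrix.submatrix_apply, Matrix.of_apply, Fin.succAbove_zero, hi,
      Fin.val_succ]
    split_ifs <;> first | omega | rfl | (congr 1; push_cast; ring)
  have hrow : ∀ j : Fin n, N 0 j.succ = 0 := fun j => by simp [N, tridiag, Fin.succAbove]
  have h00 : N 0 0 = b p := by simp [N, tridiag, Fin.succAbove]
  rw [Matrix.det_succ_row_zero, Fin.sum_univ_succ, hminor, h00,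
    Finset.sum_eq_zero fun j _ => by rw [hrow, mul_zero, zero_mul]]
  simp

theorem det_tridiag_add_two (p : ℤ) (n : ℕ) :
    (tridiag a b c p (n + 2)).det =
      a p * (tridiag a b c (p + 1) (n + 1)).det - b p * c p * (tridiag a b c (p + 2) n).det := by
  have hcol : ∀ i : Fin n, tridiag a b c p (n + 2) i.succ.succ 0 = 0 := fun i => by
    simp [tridiag]
  rw [Matrix.det_succ_column_zero, Fin.sum_univ_succ, Fin.sum_univ_succ,
    Finset.sum_eq_zero fun i _ => by rw [hcol, mul_zero, zero_mul], Fin.succAbove_zero,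
    tridiag_submatrix_succ, Fin.succ_zero_eq_one, det_tridiag_submatrix_succAbove_one]
  simp [tridiag]
  ring

theorem contK_add_one (p : ℤ) (n : ℕ) :
    contK a b c p (n + 1) =
      a p * contK a b c (p + 1) n - b p * c p * contK a b c (p + 2) (n - 1) := by
  rcases n with _ | n
  · simp [contK_one, contK_zero, contK_of_neg]
  · have h := det_tridiag_add_two a b c p n
    rw [← contK_natCast, ← contK_natCast, ← contK_natCast] at h
    push_cast at h ⊢
    rwa [add_assoc, one_add_one_eq_two, add_sub_cancel_right]

theorem Amat_zero (p : ℤ) : Amat a b c p 0 = 1 := rfl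

theorem Amat_add (p : ℤ) (n k : ℕ) :
    Amat a b c p (n + k) = Amat a b c p n * Amat a b c (p + n) k := by
  simp only [Amat, List.range_add, List.map_append, List.prod_append, List.map_map,
    Function.comp_def, Nat.cast_add, add_assoc]

theorem Amat_succ (p : ℤ) (n : ℕ) :
    Amat a b c p (n + 1) = Lmat (a p) (-(b p * c p)) * Amat a b c (p + 1) n := by
  rw [add_comm, Amat_add]
  simp [Amat]

theorem Amat_succ_eq (n : ℕ) (p : ℤ) :
    Amat a b c p (n + 1) =
      !![contK a b c p (n + 1), -(b (p + n) * c (p + n)) * contK a b c p n;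
         contK a b c (p + 1) n, -(b (p + n) * c (p + n)) * contK a b c (p + 1) (n - 1)] := by
  induction n generalizing p with
  | zero =>
    rw [Amat_succ, Amat_zero, mul_one, Lmat]
    simp [contK_one, contK_zero, contK_of_neg]
  | succ n ih =>
    have h1 := contK_add_one a b c p (n + 1)
    have h2 := contK_add_one a b c p n
    rw [Amat_succ, ih, Lmat, Matrix.mul_fin_two]
    push_cast at h1 ⊢
    rw [add_sub_cancel_right] at h1 ⊢
    rw [show p + 1 + (n : ℤ) = p + (n + 1) by ring, show p + 1 + 1 = p + 2 by ring]
    ext i j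
    fin_cases i <;> fin_cases j <;> simp
    · linear_combination -h1
    · linear_combination b (p + (n + 1)) * c (p + (n + 1)) * h2

theorem Amat_apply_zero_zero (p : ℤ) (n : ℕ) : Amat a b c p n 0 0 = contK a b c p n := by
  rcases n with _ | n
  · simp [Amat_zero, contK_zero]
  · simp [Amat_succ_eq]

theorem Amat_apply_zero_one (p : ℤ) (n : ℕ) :
    Amat a b c p n 0 1 = -(b (p + n - 1) * c (p + n - 1)) * contK a b c p (n - 1) := by
  rcases n with _ | n
  · simp [Amat_zero, contK_of_neg]
  · simp [Amat_succ_eq, ← add_assoc]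

theorem Amat_apply_one_zero (p : ℤ) (n : ℕ) :
    Amat a b c p n 1 0 = contK a b c (p + 1) (n - 1) := by
  rcases n with _ | n
  · simp [Amat_zero, contK_of_neg]
  · simp [Amat_succ_eq]

theorem Amat_add_period {s : ℤ} (ha : Function.Periodic a s) (hb : Function.Periodic b s)
    (hc : Function.Periodic c s) (p : ℤ) (n : ℕ) : Amat a b c (p + s) n = Amat a b c p n := by
  simp only [Amat, add_right_comm p s, ha _, hb _, hc _]

theorem Amat_mul_eq_pow {l : ℕ} (ha : Function.Periodic a l) (hb : Function.Periodic b l)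
    (hc : Function.Periodic c l) (p : ℤ) (m : ℕ) :
    Amat a b c p (l * m) = Amat a b c p l ^ m := by
  induction m with
  | zero => rfl
  | succ m ih =>
    rw [Nat.mul_succ, add_comm, Amat_add, Amat_add_period a b c ha hb hc, ih, pow_succ']

end Continuant

theorem contK_periodic_explicit_general (l : ℕ) (a b c : ℤ → ℂ)
    (ha : ∀ k : ℤ, a (k + l) = a k) (hb : ∀ k : ℤ, b (k + l) = b k)
    (hc : ∀ k : ℤ, c (k + l) = c k) (p : ℤ) (T D d : ℂ)
    (hT : T = (Amat a b c p l).trace) (hD : D = (Amat a b c p l).det)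
    (hD0 : D ≠ 0) (hd : d ^ 2 = D)
    (j : ℤ) (hj0 : 0 ≤ j) (m : ℕ) :
    contK a b c (p - j) ((l : ℤ) * m + j) =
      d ^ (m - 1) * (Polynomial.Chebyshev.U ℂ ((m : ℤ) - 1)).eval (T / (2 * d))
          * (contK a b c (p - j) j * contK a b c p (l : ℤ)
              - b (p - 1) * c (p - 1) * contK a b c (p - j) (j - 1)
                * contK a b c (p + 1) ((l : ℤ) - 1))
        - d ^ m * (Polynomial.Chebyshev.U ℂ ((m : ℤ) - 2)).eval (T / (2 * d))
            * contK a b c (p - j) j := by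
  lift j to ℕ using hj0
  set A := Amat a b c (p - j) j
  set B := Amat a b c p l
  have hd0 : d ≠ 0 := by
    rintro rfl
    exact hD0 (by rw [← hd, zero_pow two_ne_zero])
  have hB : B ^ 2 = (2 * d * (T / (2 * d))) • B - d ^ 2 • 1 := by
    rw [Matrix.sq_fin_two, hd, hD, hT, mul_div_cancel₀ _ (mul_ne_zero two_ne_zero hd0)]
  have hsplit : contK a b c (p - j) ((l : ℤ) * m + j) = (A * B ^ m) 0 0 := by
    rw [← Amat_mul_eq_pow a b c ha hb hc, ← sub_add_cancel p (j : ℤ), add_sub_cancel_right,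
      ← Amat_add, Amat_apply_zero_zero]
    push_cast
    rw [add_comm]
  rw [hsplit, pow_eq_chebyshevU B d _ hB m, Matrix.mul_sub, Matrix.mul_smul, Matrix.mul_smul,
    mul_one]
  simp only [Matrix.sub_apply, Matrix.smul_apply, smul_eq_mul, Matrix.mul_apply,
    Fin.sum_univ_two, A, B, Amat_apply_zero_zero, Amat_apply_zero_one, Amat_apply_one_zero,
    sub_add_cancel]
  ring

/-- Rózsa's explicit formula for periodic continuants (nonzero determinant case): for
`l`-periodic sequences, `T = tr A_l(p)`, `D = det A_l(p) ≠ 0`, `d² = D`, `0 ≤ j ≤ l − 2`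
and `m ≥ 1`:
`K_{lm+j}(p−j) = d^{m−1}·U_{m−1}(T/(2d))·(K_j(p−j)·K_l(p) − b_{p−1}·c_{p−1}·K_{j−1}(p−j)·K_{l−1}(p+1))
− d^m·U_{m−2}(T/(2d))·K_j(p−j)`. -/
theorem contK_periodic_explicit (l : ℕ) (hl : 1 ≤ l) (a b c : ℤ → ℂ)
    (ha : ∀ k : ℤ, a (k + l) = a k) (hb : ∀ k : ℤ, b (k + l) = b k)
    (hc : ∀ k : ℤ, c (k + l) = c k) (p : ℤ) (T D d : ℂ)
    (hT : T = (Amat a b c p l).trace) (hD : D = (Amat a b c p l).det)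
    (hD0 : D ≠ 0) (hd : d ^ 2 = D)
    (j : ℤ) (hj0 : 0 ≤ j) (hj : j ≤ (l : ℤ) - 2) (m : ℕ) (hm : 1 ≤ m) :
    contK a b c (p - j) ((l : ℤ) * m + j) =
      d ^ (m - 1) * (Polynomial.Chebyshev.U ℂ ((m : ℤ) - 1)).eval (T / (2 * d))
          * (contK a b c (p - j) j * contK a b c p (l : ℤ)
              - b (p - 1) * c (p - 1) * contK a b c (p - j) (j - 1)
                * contK a b c (p + 1) ((l : ℤ) - 1))
        - d ^ m * (Polynomial.Chebyshev.U ℂ ((m : ℤ) - 2)).eval (T / (2 * d))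
            * contK a b c (p - j) j :=
  contK_periodic_explicit_general l a b c ha hb hc p T D d hT hD hD0 hd j hj0 m
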